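/- arXiv:2005.12893 — 7 statements merged into one kernel-verified Lean document; each statement's English description precedes it below -/
import Mathlib

section
/- Let k ≥ 1 be an integer and let ℓ be an integer with −k/2 ≤ ℓ ≤ k/2 − 1 if k is even, and −(k+1)/2 ≤ ℓ ≤ (k−1)/2 if k is odd. Define γ := 1/2 + (i/2) · sin((2ℓ+1)π/(k+1)) / (1 + cos((2ℓ+1)π/(k+1))) ∈ ℂ. Then γ + conj(γ) = 1 and γ^{k+1} + (conj(γ))^{k+1} = 0; i.e. the pair (γ1, γ2) = (γ, conj(γ)) solves the two order conditions γ1 + γ2 = 1 and γ1^{k+1} + γ2^{k+1} = 0. -/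
open Complex ComplexConjugate

/-!
With `α = (2ℓ+1)π/(2(k+1))` the half-angle formula turns `γ` into `1/2 + (i/2) tan α`,
which is `e^{iα} / (2 cos α)`; the range of `ℓ` keeps `|α| < π/2`, so `cos α > 0`.
Hence `γ^{k+1} + conj(γ)^{k+1} = 2 cos((k+1)α) / (2 cos α)^{k+1}`, and
`(k+1)α = (2ℓ+1)π/2` is an odd multiple of `π/2`.
-/

lemma Real.sin_div_one_add_cos_eq_tan_half {θ : ℝ} (h : Real.cos (θ / 2) ≠ 0) :
    Real.sin θ / (1 + Real.cos θ) = Real.tan (θ / 2) := by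
  obtain ⟨α, rfl⟩ : ∃ α, θ = 2 * α := ⟨θ / 2, by ring⟩
  rw [mul_div_cancel_left₀ α two_ne_zero] at h ⊢
  rw [Real.sin_two_mul, Real.cos_two_mul, Real.tan_eq_sin_div_cos]
  field_simp
  ring

lemma Real.cos_pos_of_abs_lt {m N : ℝ} (hN : 0 < N) (hm : |m| < N) :
    0 < Real.cos (m * Real.pi / (2 * N)) := by
  have hratio : |m / N| < 1 := by rwa [abs_div, abs_of_pos hN, div_lt_one hN]
  obtain ⟨hlo, hhi⟩ := abs_lt.mp hratio
  apply Real.cos_pos_of_mem_Ioo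
  have : m * Real.pi / (2 * N) = m / N * (Real.pi / 2) := by field_simp
  rw [this]
  constructor <;> nlinarith [Real.pi_pos]

lemma Complex.half_add_I_mul_tan_eq_exp_div {α : ℝ} (h : Real.cos α ≠ 0) :
    1 / 2 + I / 2 * (Real.tan α : ℂ) = exp (α * I) / (2 * Real.cos α) := by
  rw [exp_mul_I, Real.tan_eq_sin_div_cos, ofReal_div, ofReal_cos, ofReal_sin]
  have : cos (α : ℂ) ≠ 0 := by exact_mod_cast h
  field_simp

lemma Complex.exp_mul_I_div_pow_add_conj_pow (α c : ℝ) (n : ℕ) :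
    (exp (α * I) / c) ^ n + conj (exp (α * I) / c) ^ n = 2 * Real.cos (n * α) / c ^ n := by
  rw [← map_pow, add_conj, div_pow, ← exp_nat_mul, ← ofReal_pow,
    show (n : ℂ) * (α * I) = ((n * α : ℝ) : ℂ) * I by push_cast; ring,
    div_ofReal_re, exp_ofReal_mul_I_re]
  push_cast
  ring

theorem order_conditions_solutions_general
    (k : ℕ) (ℓ : ℤ)
    (heven : Even k → -(k : ℝ) / 2 ≤ (ℓ : ℝ) ∧ (ℓ : ℝ) ≤ (k : ℝ) / 2 - 1)
    (hodd : Odd k → -((k : ℝ) + 1) / 2 ≤ (ℓ : ℝ) ∧ (ℓ : ℝ) ≤ ((k : ℝ) - 1) / 2)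
    (γ : ℂ)
    (hγ : γ = 1 / 2 + (Complex.I / 2) *
      ((Real.sin ((2 * (ℓ : ℝ) + 1) * Real.pi / ((k : ℝ) + 1)) /
        (1 + Real.cos ((2 * (ℓ : ℝ) + 1) * Real.pi / ((k : ℝ) + 1)))) : ℝ)) :
    γ + (starRingEnd ℂ) γ = 1 ∧ γ ^ (k + 1) + ((starRingEnd ℂ) γ) ^ (k + 1) = 0 := by
  refine ⟨by rw [add_conj, hγ]; simp [-ofReal_div], ?_⟩
  have hrange : |2 * (ℓ : ℝ) + 1| < k + 1 := by
    rcases Nat.even_or_odd k with hk | hk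
    · obtain ⟨h₁, h₂⟩ := heven hk
      exact abs_lt.mpr ⟨by linarith, by linarith⟩
    · obtain ⟨h₁, h₂⟩ := hodd hk
      exact abs_lt.mpr ⟨by linarith, by linarith⟩
  set α := (2 * (ℓ : ℝ) + 1) * Real.pi / (2 * (k + 1))
  have hcos : 0 < Real.cos α := Real.cos_pos_of_abs_lt (by positivity) hrange
  have hhalf : (2 * (ℓ : ℝ) + 1) * Real.pi / ((k : ℝ) + 1) / 2 = α := by
    simp only [α]; field_simp
  have hcos_mul : Real.cos ((k + 1 : ℕ) * α) = 0 :=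
    Real.cos_eq_zero_iff.mpr ⟨ℓ, by simp only [α]; push_cast; field_simp⟩
  rw [Real.sin_div_one_add_cos_eq_tan_half (by rw [hhalf]; exact hcos.ne'), hhalf,
    half_add_I_mul_tan_eq_exp_div hcos.ne'] at hγ
  rw [hγ, ← ofReal_ofNat, ← ofReal_mul, exp_mul_I_div_pow_add_conj_pow, hcos_mul]
  simp

/-- **Formula (4) of the paper.**
For `k ≥ 1` and `ℓ` in the stated range, the complex number
`γ = 1/2 + (i/2)·sin((2ℓ+1)π/(k+1))/(1 + cos((2ℓ+1)π/(k+1)))`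
together with its conjugate solves the order conditions
`γ1 + γ2 = 1` and `γ1^{k+1} + γ2^{k+1} = 0`. -/
theorem order_conditions_solutions
    (k : ℕ) (hk : 1 ≤ k) (ℓ : ℤ)
    (heven : Even k → -(k : ℝ) / 2 ≤ (ℓ : ℝ) ∧ (ℓ : ℝ) ≤ (k : ℝ) / 2 - 1)
    (hodd : Odd k → -((k : ℝ) + 1) / 2 ≤ (ℓ : ℝ) ∧ (ℓ : ℝ) ≤ ((k : ℝ) - 1) / 2)
    (γ : ℂ)
    (hγ : γ = 1 / 2 + (Complex.I / 2) *
      ((Real.sin ((2 * (ℓ : ℝ) + 1) * Real.pi / ((k : ℝ) + 1)) /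
        (1 + Real.cos ((2 * (ℓ : ℝ) + 1) * Real.pi / ((k : ℝ) + 1)))) : ℝ)) :
    γ + (starRingEnd ℂ) γ = 1 ∧ γ ^ (k + 1) + ((starRingEnd ℂ) γ) ^ (k + 1) = 0 :=
  order_conditions_solutions_general k ℓ heven hodd γ hγ
end

section
/- Let d ≥ 1, q ∈ ℕ, and let S_z : ℂ^d → ℂ^d, defined for z ∈ ℂ with |z| < z0, be a family of bijections which is conjugation-equivariant (conj(S_z(x)) = S_{conj(z)}(conj(x)) for all x, z), uniformly Lipschitz on a compact set K' ⊆ ℂ^d containing the compact set K and all relevant images, and pseudo-symmetric of order q on K': there is C1 > 0 with ‖(S_{−z})^{−1}(x) − S_z(x)‖ ≤ C1 |z|^{q+1} for all x ∈ K', |z| < z0. Let γ ∈ ℂ and, for real τ, define ψ_τ := S_{γτ} ∘ S_{conj(γ)τ}. Then there exist C2 > 0 and τ1 > 0 such that for all real |τ| < τ1 and all x ∈ K, ‖conj(ψ_τ(conj(x))) − (ψ_{−τ})^{−1}(x)‖ ≤ C2 |τ|^{q+1}; i.e. the complex-conjugate method coincides with the adjoint method up to O(τ^{q+1}). -/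
/-!
Write `a = γτ` and `b = γ̄τ`. Conjugation-equivariance turns `conj ∘ ψ_τ ∘ conj` into
`S_b ∘ S_a`, while `(ψ_{-τ})⁻¹ = (S_{-b})⁻¹ ∘ (S_{-a})⁻¹`. Both factors of the second
composition agree with those of the first up to `C₁ (|γ| |τ|)^{q+1}` by pseudo-symmetry, and
the error made in the inner factor is propagated by the outer one with at most its Lipschitz
constant.
-/

open Function

theorem Function.invFun_comp_of_bijective {α β γ : Type*} [Nonempty α] [Nonempty β]
    {f : β → γ} {g : α → β} (hf : Bijective f) (hg : Bijective g) :
    invFun (f ∘ g) = invFun g ∘ invFun f :=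
  invFun_eq_of_injective_of_rightInverse (hf.1.comp hg.1) fun y => by
    simp only [comp_apply, rightInverse_invFun hg.2 _, rightInverse_invFun hf.2 _]

theorem norm_comp_sub_comp_le {α E F : Type*} [SeminormedAddCommGroup E]
    [SeminormedAddCommGroup F] {f f' : E → F} {g g' : α → E} {s : Set E} {L εf εg : ℝ}
    (hf : ∀ y ∈ s, ∀ y' ∈ s, ‖f y - f y'‖ ≤ L * ‖y - y'‖) (hL : 0 ≤ L) {x : α}
    (hgx : g x ∈ s) (hg'x : g' x ∈ s) (hg : ‖g x - g' x‖ ≤ εg)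
    (hf' : ‖f (g' x) - f' (g' x)‖ ≤ εf) :
    ‖f (g x) - f' (g' x)‖ ≤ L * εg + εf :=
  calc ‖f (g x) - f' (g' x)‖ ≤ ‖f (g x) - f (g' x)‖ + ‖f (g' x) - f' (g' x)‖ :=
        norm_sub_le_norm_sub_add_norm_sub _ _ _
    _ ≤ L * ‖g x - g' x‖ + εf := add_le_add (hf _ hgx _ hg'x) hf'
    _ ≤ L * εg + εf := by gcongr

theorem norm_mul_ofReal (γ : ℂ) (τ : ℝ) : ‖γ * τ‖ = ‖γ‖ * |τ| := by
  rw [norm_mul, Complex.norm_real, Real.norm_eq_abs]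

theorem norm_conj_mul_ofReal (γ : ℂ) (τ : ℝ) : ‖starRingEnd ℂ γ * τ‖ = ‖γ‖ * |τ| := by
  rw [norm_mul_ofReal, Complex.norm_conj]

theorem mul_abs_lt_of_abs_lt_div_add_one {c τ z0 : ℝ} (hc : 0 ≤ c) (hτ : |τ| < z0 / (c + 1)) :
    c * |τ| < z0 := by
  rw [lt_div_iff₀ (by positivity)] at hτ
  nlinarith [abs_nonneg τ]

theorem star_comp_star_of_conj_equivariant {X : Type*} [InvolutiveStar X]
    {S : ℂ → X → X} (hS : ∀ z x, star (S z x) = S (starRingEnd ℂ z) (star x))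
    (z w : ℂ) (x : X) :
    star (S z (S w (star x))) = S (starRingEnd ℂ z) (S (starRingEnd ℂ w) x) := by
  rw [hS, hS, star_star]

theorem conjugate_equals_adjoint_general
    (d q : ℕ) (z0 : ℝ) (hz0 : 0 < z0)
    (K K' : Set (Fin d → ℂ)) (hKK' : K ⊆ K')
    (S : ℂ → (Fin d → ℂ) → (Fin d → ℂ))
    (hbij : ∀ z : ℂ, ‖z‖ < z0 → Function.Bijective (S z))
    -- `K'` contains all relevant images
    (himg : ∀ z : ℂ, ‖z‖ < z0 →
      S z '' K' ⊆ K' ∧ Function.invFun (S (-z)) '' K' ⊆ K' ∧ star '' K' ⊆ K')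
    -- conjugation-equivariance
    (hSconj : ∀ (z : ℂ) (x : Fin d → ℂ), star (S z x) = S ((starRingEnd ℂ) z) (star x))
    -- uniform Lipschitz bound on `K'`
    (hLip : ∃ L : ℝ, 0 ≤ L ∧ ∀ z : ℂ, ‖z‖ < z0 → ∀ x ∈ K', ∀ y ∈ K',
      ‖S z x - S z y‖ ≤ L * ‖x - y‖)
    -- pseudo-symmetry of order q on `K'`
    (C1 : ℝ) (hC1 : 0 < C1)
    (hpsym : ∀ z : ℂ, ‖z‖ < z0 → ∀ x ∈ K',
      ‖Function.invFun (S (-z)) x - S z x‖ ≤ C1 * ‖z‖ ^ (q + 1))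
    -- the composed method
    (γ : ℂ)
    (ψ : ℝ → (Fin d → ℂ) → (Fin d → ℂ))
    (hψ : ∀ (τ : ℝ) (x : Fin d → ℂ), ψ τ x = S (γ * τ) (S ((starRingEnd ℂ) γ * τ) x)) :
    ∃ C2 > 0, ∃ τ1 > 0, ∀ τ : ℝ, |τ| < τ1 → ∀ x ∈ K,
      ‖star (ψ τ (star x)) - Function.invFun (ψ (-τ)) x‖ ≤ C2 * |τ| ^ (q + 1) := by
  obtain ⟨L, hL, hSLip⟩ := hLip
  refine ⟨(L + 1) * C1 * (‖γ‖ + 1) ^ (q + 1), by positivity, z0 / (‖γ‖ + 1), by positivity,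
    fun τ hτ x hx => ?_⟩
  set a : ℂ := γ * τ
  set b : ℂ := starRingEnd ℂ γ * τ
  have ha : ‖a‖ < z0 := norm_mul_ofReal γ τ ▸ mul_abs_lt_of_abs_lt_div_add_one (norm_nonneg γ) hτ
  have hb : ‖b‖ < z0 :=
    norm_conj_mul_ofReal γ τ ▸ mul_abs_lt_of_abs_lt_div_add_one (norm_nonneg γ) hτ
  have hψ_neg : ψ (-τ) = S (-a) ∘ S (-b) := funext fun y => by simp [hψ, a, b]
  have hconj : star (ψ τ (star x)) = S b (S a x) := by
    rw [hψ, star_comp_star_of_conj_equivariant hSconj]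
    simp [a, b]
  have hadj : invFun (ψ (-τ)) x = invFun (S (-b)) (invFun (S (-a)) x) := by
    rw [hψ_neg, invFun_comp_of_bijective (hbij _ (by rwa [norm_neg]))
      (hbij _ (by rwa [norm_neg]))]
    rfl
  have hxK' : x ∈ K' := hKK' hx
  have huK' : invFun (S (-a)) x ∈ K' := (himg a ha).2.1 ⟨x, hxK', rfl⟩
  have herr := norm_comp_sub_comp_le (hSLip b hb) hL ((himg a ha).1 ⟨x, hxK', rfl⟩)
    huK' ((norm_sub_rev _ _).trans_le (hpsym a ha x hxK'))
    ((norm_sub_rev _ _).trans_le (hpsym b hb _ huK'))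
  rw [hconj, hadj]
  refine herr.trans ?_
  rw [norm_mul_ofReal, norm_conj_mul_ofReal, mul_pow]
  have hγ : ‖γ‖ ^ (q + 1) ≤ (‖γ‖ + 1) ^ (q + 1) := by gcongr; linarith
  calc L * (C1 * (‖γ‖ ^ (q + 1) * |τ| ^ (q + 1))) + C1 * (‖γ‖ ^ (q + 1) * |τ| ^ (q + 1))
      = (L + 1) * C1 * ‖γ‖ ^ (q + 1) * |τ| ^ (q + 1) := by ring
    _ ≤ (L + 1) * C1 * (‖γ‖ + 1) ^ (q + 1) * |τ| ^ (q + 1) := by gcongr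

/-- **Key intermediate relation (eq. 16) in the proof of Proposition 2.**
If `S_z` is conjugation-equivariant, uniformly Lipschitz, and pseudo-symmetric of order `q`,
then for `ψ_τ = S_{γτ} ∘ S_{γ̄τ}` the complex-conjugate method coincides with the adjoint
method up to `O(τ^{q+1})`:
`conj(ψ_τ(conj x)) = (ψ_{-τ})⁻¹(x) + O(τ^{q+1})` uniformly on `K`. -/
theorem conjugate_equals_adjoint
    (d q : ℕ) (hd : 1 ≤ d) (z0 : ℝ) (hz0 : 0 < z0)
    (K K' : Set (Fin d → ℂ)) (hK : IsCompact K) (hK' : IsCompact K') (hKK' : K ⊆ K')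
    (S : ℂ → (Fin d → ℂ) → (Fin d → ℂ))
    (hbij : ∀ z : ℂ, ‖z‖ < z0 → Function.Bijective (S z))
    -- `K'` contains all relevant images
    (himg : ∀ z : ℂ, ‖z‖ < z0 →
      S z '' K' ⊆ K' ∧ Function.invFun (S (-z)) '' K' ⊆ K' ∧ star '' K' ⊆ K')
    -- conjugation-equivariance
    (hSconj : ∀ (z : ℂ) (x : Fin d → ℂ), star (S z x) = S ((starRingEnd ℂ) z) (star x))
    -- uniform Lipschitz bound on `K'`
    (hLip : ∃ L : ℝ, 0 ≤ L ∧ ∀ z : ℂ, ‖z‖ < z0 → ∀ x ∈ K', ∀ y ∈ K',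
      ‖S z x - S z y‖ ≤ L * ‖x - y‖)
    -- pseudo-symmetry of order q on `K'`
    (C1 : ℝ) (hC1 : 0 < C1)
    (hpsym : ∀ z : ℂ, ‖z‖ < z0 → ∀ x ∈ K',
      ‖Function.invFun (S (-z)) x - S z x‖ ≤ C1 * ‖z‖ ^ (q + 1))
    -- the composed method
    (γ : ℂ)
    (ψ : ℝ → (Fin d → ℂ) → (Fin d → ℂ))
    (hψ : ∀ (τ : ℝ) (x : Fin d → ℂ), ψ τ x = S (γ * τ) (S ((starRingEnd ℂ) γ * τ) x)) :
    ∃ C2 > 0, ∃ τ1 > 0, ∀ τ : ℝ, |τ| < τ1 → ∀ x ∈ K,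
      ‖star (ψ τ (star x)) - Function.invFun (ψ (-τ)) x‖ ≤ C2 * |τ| ^ (q + 1) :=
  conjugate_equals_adjoint_general d q z0 hz0 K K' hKK' S hbij himg hSconj hLip C1 hC1 hpsym γ ψ hψ
end

section
/- For j ∈ {1, 2, 3} let γ^{[2j]} := 1/2 + (i/2) tan(π/(2(2j+1))). For every i ∈ {1, 2, 3} and every choice of signs ε_1, …, ε_i ∈ {+1, −1}, let c_j := γ^{[2j]} if ε_j = +1 and c_j := conj(γ^{[2j]}) if ε_j = −1. Then the principal argument of the product c_1 c_2 ⋯ c_i equals (π/2) · Σ_{j=1}^{i} ε_j/(2j+1), and in particular, since Σ_{j=1}^{3} 1/(2j+1) = 71/105 ≤ 1, the real part of c_1 c_2 ⋯ c_i is strictly positive. -/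
open Finset Complex
open scoped Real

/-! For `0 < cos α`, `1/2 + (i/2) tan α = e^{iα} / (2 cos α)`, so choosing `γ^{[2j]}` or its
conjugate contributes the angle `±π/(2(2j+1))` and a positive modulus. The product therefore has
argument `Σ ε_j π/(2(2j+1))`, whose absolute value is at most `(71/105) π/2 < π/2`; this lies in
the range of `arg` and makes the real part positive. -/

lemma half_add_I_div_two_mul_tan_eq {α : ℝ} (hα : Real.cos α ≠ 0) :
    1 / 2 + (I / 2) * (Real.tan α : ℂ) = ((2 * Real.cos α)⁻¹ : ℝ) * exp (α * I) := by
  have hα' : cos α ≠ 0 := by exact_mod_cast hα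
  rw [exp_mul_I]
  push_cast
  rw [tan_eq_sin_div_cos]
  field_simp

lemma ite_conj_eq_ofReal_mul_exp {z : ℂ} {r α : ℝ} (hz : z = r * exp (α * I)) {e : ℤ}
    (he : e = 1 ∨ e = -1) :
    (if e = 1 then z else starRingEnd ℂ z) = r * exp (((e * α : ℝ) : ℂ) * I) := by
  rcases he with rfl | rfl
  · simp [hz]
  · rw [if_neg (by decide), hz, map_mul, conj_ofReal, ← exp_conj, map_mul, conj_ofReal, conj_I]
    push_cast
    ring_nf

lemma prod_ofReal_mul_exp_mul_I {ι : Type*} (s : Finset ι) (r θ : ι → ℝ) :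
    ∏ j ∈ s, ((r j : ℂ) * exp (θ j * I)) =
      ((∏ j ∈ s, r j : ℝ) : ℂ) * exp ((∑ j ∈ s, θ j : ℝ) * I) := by
  rw [prod_mul_distrib, ← exp_sum, ← sum_mul]
  push_cast
  rfl

lemma arg_ofReal_mul_exp_mul_I {r θ : ℝ} (hr : 0 < r) (hθ : θ ∈ Set.Ioc (-π) π) :
    arg (r * exp (θ * I)) = θ := by
  rw [arg_real_mul _ hr, arg_exp_mul_I, toIocMod_eq_self]
  simpa [two_mul, ← add_assoc] using hθ

lemma re_ofReal_mul_exp_mul_I_pos {r θ : ℝ} (hr : 0 < r) (hθ : |θ| < π / 2) :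
    0 < (r * exp (θ * I)).re := by
  rw [re_ofReal_mul, exp_ofReal_mul_I_re]
  exact mul_pos hr (Real.cos_pos_of_mem_Ioo (abs_lt.mp hθ))

lemma cos_pi_div_two_mul_pos {x : ℝ} (hx : 1 < x) : 0 < Real.cos (π / (2 * x)) := by
  have hπ := Real.pi_pos
  apply Real.cos_pos_of_mem_Ioo ⟨by linarith [div_pos hπ (by linarith : (0:ℝ) < 2 * x)], ?_⟩
  rw [div_lt_div_iff₀ (by linarith) two_pos]
  nlinarith

lemma abs_sum_sign_div_le {ι : Type*} {s : Finset ι} {ε : ι → ℤ} (hε : ∀ j, ε j = 1 ∨ ε j = -1)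
    {d : ι → ℝ} (hd : ∀ j ∈ s, 0 < d j) :
    |∑ j ∈ s, (ε j : ℝ) / d j| ≤ ∑ j ∈ s, 1 / d j := by
  refine (abs_sum_le_sum_abs _ _).trans (sum_le_sum fun j hj => ?_)
  rcases hε j with h | h <;> simp [h, neg_div, abs_of_pos (hd j hj)]

lemma sum_Icc_one_three_one_div_two_mul_add_one :
    ∑ j ∈ Icc (1 : ℕ) 3, (1 : ℝ) / (2 * (j : ℝ) + 1) = 71 / 105 := by
  rw [show Icc (1 : ℕ) 3 = {1, 2, 3} from rfl]
  norm_num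

lemma sum_Icc_one_div_two_mul_add_one_le {i : ℕ} (hi : i ≤ 3) :
    ∑ j ∈ Icc 1 i, (1 : ℝ) / (2 * (j : ℝ) + 1) ≤ 71 / 105 := by
  rw [← sum_Icc_one_three_one_div_two_mul_add_one]
  exact sum_le_sum_of_subset_of_nonneg (Icc_subset_Icc_right hi) fun _ _ _ => by positivity

lemma abs_pi_div_two_mul_sum_sign_div_lt {i : ℕ} (hi : i ≤ 3) {ε : ℕ → ℤ}
    (hε : ∀ j, ε j = 1 ∨ ε j = -1) :
    |π / 2 * ∑ j ∈ Icc 1 i, (ε j : ℝ) / (2 * (j : ℝ) + 1)| < π / 2 := by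
  have hsum := (abs_sum_sign_div_le (s := Icc 1 i) hε fun j _ => by positivity).trans
    (sum_Icc_one_div_two_mul_add_one_le hi)
  rw [abs_mul, abs_of_pos (by positivity)]
  nlinarith [Real.pi_pos]

/-- **Section 3 of the paper.**
The coefficients of the recursive construction `R̂⁽¹⁾, R̂⁽²⁾, R̂⁽³⁾` starting from a
second-order method are products `c_1 ⋯ c_i` with `c_j ∈ {γ^{[2j]}, conj γ^{[2j]}}`.
Their principal argument is `(π/2) Σ_{j=1}^i ε_j/(2j+1)`, and since
`Σ_{j=1}^3 1/(2j+1) = 71/105 ≤ 1`, all of them have strictly positive real part. -/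
theorem coefficients_positive_real_part
    (γ : ℕ → ℂ)
    (hγ : ∀ k : ℕ, γ k = 1 / 2 + (Complex.I / 2) *
      (Real.tan (Real.pi / (2 * ((k : ℝ) + 1))) : ℝ))
    (i : ℕ) (hi : i ∈ ({1, 2, 3} : Set ℕ))
    (ε : ℕ → ℤ) (hε : ∀ j, ε j = 1 ∨ ε j = -1)
    (c : ℕ → ℂ)
    (hc : ∀ j, c j = if ε j = 1 then γ (2 * j) else (starRingEnd ℂ) (γ (2 * j))) :
    (∑ j ∈ Finset.Icc (1 : ℕ) 3, (1 : ℝ) / (2 * (j : ℝ) + 1)) = 71 / 105 ∧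
    Complex.arg (∏ j ∈ Finset.Icc 1 i, c j) =
      (Real.pi / 2) * ∑ j ∈ Finset.Icc 1 i, (ε j : ℝ) / (2 * (j : ℝ) + 1) ∧
    0 < (∏ j ∈ Finset.Icc 1 i, c j).re := by
  have hi3 : i ≤ 3 := by rcases hi with rfl | rfl | rfl <;> norm_num
  set α : ℕ → ℝ := fun j => π / (2 * (2 * j + 1)) with hα
  set T := ∑ j ∈ Icc 1 i, (ε j : ℝ) / (2 * (j : ℝ) + 1)
  have hT : |π / 2 * T| < π / 2 := abs_pi_div_two_mul_sum_sign_div_lt hi3 hε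
  have hcos : ∀ j ∈ Icc 1 i, 0 < Real.cos (α j) := fun j hj => by
    have : (1 : ℝ) ≤ j := by exact_mod_cast (mem_Icc.mp hj).1
    exact cos_pi_div_two_mul_pos (by linarith)
  have hpolar : ∀ j ∈ Icc 1 i,
      c j = ((2 * Real.cos (α j))⁻¹ : ℝ) * exp (((ε j * α j : ℝ) : ℂ) * I) := fun j hj => by
    refine (hc j).trans (ite_conj_eq_ofReal_mul_exp ?_ (hε j))
    rw [hγ, ← half_add_I_div_two_mul_tan_eq (hcos j hj).ne', hα]
    push_cast
    ring_nf
  have hangle : ∑ j ∈ Icc 1 i, (ε j : ℝ) * α j = π / 2 * T := by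
    rw [mul_sum]
    refine sum_congr rfl fun j _ => ?_
    rw [hα]
    field_simp
  have hprod : ∏ j ∈ Icc 1 i, c j = ((∏ j ∈ Icc 1 i, (2 * Real.cos (α j))⁻¹ : ℝ) : ℂ) *
      exp (((π / 2 * T : ℝ) : ℂ) * I) := by
    rw [prod_congr rfl hpolar, prod_ofReal_mul_exp_mul_I, hangle]
  have hr : 0 < ∏ j ∈ Icc 1 i, (2 * Real.cos (α j))⁻¹ :=
    prod_pos fun j hj => by have := hcos j hj; positivity
  refine ⟨sum_Icc_one_three_one_div_two_mul_add_one, ?_, ?_⟩ <;> rw [hprod]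
  · obtain ⟨hlo, hhi⟩ := abs_lt.mp hT
    exact arg_ofReal_mul_exp_mul_I hr ⟨by linarith [Real.pi_pos], by linarith [Real.pi_pos]⟩
  · exact re_ofReal_mul_exp_mul_I_pos hr hT
end

section
/- Let b1 := 1/10 − i/30, b2 := 4/15 + (2/15)i, b3 := 4/15 − (1/5)i ∈ ℂ. Then the maximum of |Arg(b1)|, |Arg(b2)|, |Arg(b3)| equals arccos(4/5), where Arg denotes the principal argument; explicitly, |Arg(b3)| = arccos(4/5), |Arg(b1)| = arctan(1/3) ≤ arccos(4/5) and |Arg(b2)| = arctan(1/2) ≤ arccos(4/5). -/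
/-!
In the right half-plane `|arg z| = arctan (|Im z| / Re z)`, so the three arguments are
`arctan (1/3)`, `arctan (1/2)` and `arctan (3/4)`; the last is `arccos (4/5)` because
`(4, 3, 5)` is a Pythagorean triple, and it dominates the other two by monotonicity of `arctan`.
-/

open Real

lemma Real.abs_arctan (x : ℝ) : |arctan x| = arctan |x| := by
  rcases le_total 0 x with hx | hx
  · rw [abs_of_nonneg hx, abs_of_nonneg (arctan_nonneg.2 hx)]
  · rw [abs_of_nonpos hx, abs_of_nonpos (arctan_le_zero.2 hx), arctan_neg]

lemma Complex.arg_eq_arctan_of_re_pos {z : ℂ} (hz : 0 < z.re) :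
    z.arg = Real.arctan (z.im / z.re) := by
  have hlt : |z.arg| < π / 2 := Complex.abs_arg_lt_pi_div_two_iff.2 (Or.inl hz)
  rw [← Complex.tan_arg, Real.arctan_tan (abs_lt.1 hlt).1 (abs_lt.1 hlt).2]

lemma Complex.abs_arg_eq_arctan_of_re_pos {z : ℂ} (hz : 0 < z.re) :
    |z.arg| = Real.arctan (|z.im| / z.re) := by
  rw [Complex.arg_eq_arctan_of_re_pos hz, Real.abs_arctan, abs_div, abs_of_pos hz]

lemma Real.arccos_four_fifths : arccos (4 / 5) = arctan (3 / 4) := by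
  rw [arccos_eq_arctan (by norm_num), show (1 - (4 / 5 : ℝ) ^ 2) = (3 / 5) ^ 2 by norm_num,
    sqrt_sq (by norm_num)]
  norm_num

/-- **Section 3 of the paper, maximal argument of the coefficients of scheme (16).**
For the coefficients `b1 = 1/10 - i/30`, `b2 = 4/15 + 2i/15`, `b3 = 4/15 - i/5` of the
fourth-order symmetric splitting scheme, one has `|Arg b1| = arctan(1/3)`,
`|Arg b2| = arctan(1/2)`, `|Arg b3| = arccos(4/5)`, both arctangents are at most
`arccos(4/5)`, and hence the maximum of the three arguments is `arccos(4/5)`. -/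
theorem max_argument_s4sim
    (b1 b2 b3 : ℂ)
    (hb1 : b1 = 1 / 10 - Complex.I / 30)
    (hb2 : b2 = 4 / 15 + (2 / 15) * Complex.I)
    (hb3 : b3 = 4 / 15 - (1 / 5) * Complex.I) :
    |Complex.arg b3| = Real.arccos (4 / 5) ∧
    |Complex.arg b1| = Real.arctan (1 / 3) ∧
    |Complex.arg b2| = Real.arctan (1 / 2) ∧
    Real.arctan (1 / 3) ≤ Real.arccos (4 / 5) ∧
    Real.arctan (1 / 2) ≤ Real.arccos (4 / 5) ∧
    max (max |Complex.arg b1| |Complex.arg b2|) |Complex.arg b3| =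
      Real.arccos (4 / 5) := by
  subst hb1 hb2 hb3
  have h1 : |Complex.arg (1 / 10 - Complex.I / 30)| = arctan (1 / 3) := by
    rw [Complex.abs_arg_eq_arctan_of_re_pos (by norm_num)]; norm_num
  have h2 : |Complex.arg (4 / 15 + (2 / 15) * Complex.I)| = arctan (1 / 2) := by
    rw [Complex.abs_arg_eq_arctan_of_re_pos (by norm_num)]; norm_num
  have h3 : |Complex.arg (4 / 15 - (1 / 5) * Complex.I)| = arccos (4 / 5) := by
    rw [Complex.abs_arg_eq_arctan_of_re_pos (by norm_num), arccos_four_fifths]; norm_num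
  have hle1 : arctan (1 / 3) ≤ arccos (4 / 5) :=
    arccos_four_fifths ▸ arctan_strictMono.monotone (by norm_num)
  have hle2 : arctan (1 / 2) ≤ arccos (4 / 5) :=
    arccos_four_fifths ▸ arctan_strictMono.monotone (by norm_num)
  refine ⟨h3, h1, h2, hle1, hle2, ?_⟩
  rw [h1, h2, h3]
  exact max_eq_right (max_le hle1 hle2)
end

section
/- Let θ4 := arccos(4/5). Then (2θ4)/π + Σ_{j=1}^{4} 1/(2j+3) = (2θ4)/π + 1888/3465 < 1. Consequently, for every complex number b with |Arg(b)| ≤ θ4 and b ≠ 0, every i ∈ {0, 1, 2, 3, 4} and every choice of signs ε_1, …, ε_i ∈ {+1, −1}, the product b · c_1 ⋯ c_i has strictly positive real part, where c_j := γ^{[2j+2]} if ε_j = +1 and c_j := conj(γ^{[2j+2]}) if ε_j = −1, with γ^{[k]} := 1/2 + (i/2) tan(π/(2(k+1))). -/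
open Finset

open scoped Real ComplexConjugate

/-!
Writing `φ = π / (2(k+1))`, one has `γ^{[k]} = (cos φ + i sin φ) / (2 cos φ)`, so `Arg γ^{[k]} = φ`,
and conjugation only flips the sign of the argument. Arguments of nonzero factors add as long as
their sum stays below `π`, hence `|Arg (b c_1 ⋯ c_i)| ≤ θ4 + (π/2) Σ_{j=1}^{4} 1/(2j+3)`, which is
`< π/2` precisely by the numerical inequality. That one holds because `cos (2/3) ≤ 4/5` gives
`θ4 ≤ 2/3`, so `2 θ4 / π < 4/9 < 1 - 1888/3465`.
-/

namespace Complex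

theorem arg_half_add_I_half_mul_tan {θ : ℝ} (h0 : -(π / 2) < θ) (h1 : θ < π / 2) :
    arg (1 / 2 + (I / 2) * (Real.tan θ : ℝ)) = θ := by
  have hcos : 0 < Real.cos θ := Real.cos_pos_of_mem_Ioo ⟨h0, h1⟩
  have hscale : 1 / 2 + (I / 2) * (Real.tan θ : ℝ)
      = ((2 * Real.cos θ)⁻¹ : ℝ) * (Real.cos θ + Real.sin θ * I) := by
    have : (Real.cos θ : ℂ) ≠ 0 := by exact_mod_cast hcos.ne'
    rw [Real.tan_eq_sin_div_cos]
    simp only [ofReal_div, ofReal_mul, ofReal_inv, ofReal_ofNat]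
    field_simp
  rw [hscale, arg_real_mul _ (by positivity), ofReal_cos, ofReal_sin,
    arg_cos_add_sin_mul_I ⟨by linarith [Real.pi_pos], by linarith [Real.pi_pos]⟩]

theorem half_add_I_half_mul_ofReal_ne_zero (x : ℝ) : (1 / 2 + (I / 2) * x : ℂ) ≠ 0 :=
  fun h ↦ by simpa using congrArg re h

theorem abs_arg_conj (z : ℂ) : |arg (conj z)| = |arg z| := by
  rw [arg_conj]
  split_ifs with h
  · rw [h]
  · exact abs_neg _

theorem abs_arg_mul_le {z w : ℂ} (hz : z ≠ 0) (hw : w ≠ 0) (hlt : |arg z| + |arg w| < π) :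
    |arg (z * w)| ≤ |arg z| + |arg w| := by
  have := neg_abs_le (arg z)
  have := neg_abs_le (arg w)
  have := le_abs_self (arg z)
  have := le_abs_self (arg w)
  rw [arg_mul hz hw ⟨by linarith, by linarith⟩]
  exact abs_add_le _ _

theorem abs_arg_prod_le {ι : Type*} (s : Finset ι) {f : ι → ℂ} (hf : ∀ j ∈ s, f j ≠ 0)
    (hlt : ∑ j ∈ s, |arg (f j)| < π) : |arg (∏ j ∈ s, f j)| ≤ ∑ j ∈ s, |arg (f j)| := by
  classical
  induction s using Finset.induction_on with
  | empty => simp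
  | insert i s hi ih =>
    rw [sum_insert hi] at hlt ⊢
    rw [prod_insert hi]
    have hf' : ∀ j ∈ s, f j ≠ 0 := fun j hj ↦ hf j (mem_insert_of_mem hj)
    have ih := ih hf' (by linarith [abs_nonneg (arg (f i))])
    calc |arg (f i * ∏ j ∈ s, f j)| ≤ |arg (f i)| + |arg (∏ j ∈ s, f j)| :=
          abs_arg_mul_le (hf i (mem_insert_self i s)) (prod_ne_zero_iff.2 hf') (by linarith)
      _ ≤ |arg (f i)| + ∑ j ∈ s, |arg (f j)| := by gcongr

theorem arg_half_add_I_half_mul_tan_pi_div {k : ℕ} (hk : 0 < k) :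
    arg (1 / 2 + (I / 2) * (Real.tan (π / (2 * ((k : ℝ) + 1))) : ℝ)) = π / (2 * ((k : ℝ) + 1)) := by
  have hk' : (1 : ℝ) ≤ k := by exact_mod_cast hk
  have hpos : 0 < π / (2 * ((k : ℝ) + 1)) := by positivity
  refine arg_half_add_I_half_mul_tan (by linarith [Real.pi_pos]) ?_
  rw [div_lt_div_iff₀ (by positivity) two_pos]
  nlinarith [Real.pi_pos]

theorem abs_arg_half_add_I_half_mul_tan_pi_div_even (j : ℕ) :
    |arg (1 / 2 + (I / 2) * (Real.tan (π / (2 * (((2 * j + 2 : ℕ) : ℝ) + 1))) : ℝ))|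
      = π / 2 * (1 / (2 * (j : ℝ) + 3)) := by
  rw [arg_half_add_I_half_mul_tan_pi_div (by omega), abs_of_pos (by positivity)]
  push_cast
  field_simp
  ring

end Complex

theorem Real.arccos_four_fifths_le : Real.arccos (4 / 5) ≤ 2 / 3 := by
  have hbound := Real.cos_bound (x := 2 / 3) (by norm_num [abs_of_nonneg])
  have hcos : Real.cos (2 / 3) ≤ 4 / 5 := by
    norm_num [abs_of_nonneg] at hbound
    linarith [(abs_le.1 hbound).2]
  calc Real.arccos (4 / 5) ≤ Real.arccos (Real.cos (2 / 3)) := Real.arccos_le_arccos hcos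
    _ = 2 / 3 := Real.arccos_cos (by norm_num) (by linarith [Real.pi_gt_three])

theorem sum_Icc_one_four_inv_two_mul_add_three :
    (∑ j ∈ Icc (1 : ℕ) 4, (1 : ℝ) / (2 * (j : ℝ) + 3)) = 1888 / 3465 := by
  norm_num [sum_Icc_succ_top]

theorem sum_Icc_pi_div_two_mul_inv_two_mul_add_three_le {i : ℕ} (hi : i ≤ 4) :
    ∑ j ∈ Icc 1 i, π / 2 * (1 / (2 * (j : ℝ) + 3)) ≤ π / 2 * (1888 / 3465) := by
  rw [← mul_sum, ← sum_Icc_one_four_inv_two_mul_add_three]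
  gcongr

/-- **Section 3 of the paper, positivity starting from a fourth-order method.**
With `θ4 = arccos(4/5)` one has `2θ4/π + Σ_{j=1}^4 1/(2j+3) = 2θ4/π + 1888/3465 < 1`.
Hence, for any nonzero `b` with `|Arg b| ≤ θ4` and any choice of
`c_j ∈ {γ^{[2j+2]}, conj γ^{[2j+2]}}` for `j = 1, …, i` with `i ≤ 4`, the product
`b · c_1 ⋯ c_i` has strictly positive real part. -/
theorem coefficients_positive_from_fourth_order
    (θ4 : ℝ) (hθ4 : θ4 = Real.arccos (4 / 5))
    (γ : ℕ → ℂ)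
    (hγ : ∀ k : ℕ, γ k = 1 / 2 + (Complex.I / 2) *
      (Real.tan (Real.pi / (2 * ((k : ℝ) + 1))) : ℝ)) :
    (∑ j ∈ Finset.Icc (1 : ℕ) 4, (1 : ℝ) / (2 * (j : ℝ) + 3)) = 1888 / 3465 ∧
    2 * θ4 / Real.pi + 1888 / 3465 < 1 ∧
    ∀ b : ℂ, b ≠ 0 → |Complex.arg b| ≤ θ4 →
      ∀ i ∈ ({0, 1, 2, 3, 4} : Set ℕ),
        ∀ ε : ℕ → ℤ, (∀ j, ε j = 1 ∨ ε j = -1) →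
          ∀ c : ℕ → ℂ,
            (∀ j, c j = if ε j = 1 then γ (2 * j + 2)
              else (starRingEnd ℂ) (γ (2 * j + 2))) →
            0 < (b * ∏ j ∈ Finset.Icc 1 i, c j).re := by
  have hθ : θ4 < π / 2 * (1577 / 3465) := by
    nlinarith [hθ4 ▸ Real.arccos_four_fifths_le, Real.pi_gt_three]
  refine ⟨sum_Icc_one_four_inv_two_mul_add_three, ?_, fun b hb hbθ i hi _ _ c hc ↦ ?_⟩
  · have : 2 * θ4 / π < 1577 / 3465 := by rw [div_lt_iff₀ Real.pi_pos]; linarith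
    linarith
  have hi4 : i ≤ 4 := by simp only [Set.mem_insert_iff, Set.mem_singleton_iff] at hi; omega
  have hcj : ∀ j, c j ≠ 0 ∧ |Complex.arg (c j)| = π / 2 * (1 / (2 * (j : ℝ) + 3)) := by
    intro j
    have hne : γ (2 * j + 2) ≠ 0 := hγ _ ▸ Complex.half_add_I_half_mul_ofReal_ne_zero _
    have harg := hγ (2 * j + 2) ▸ Complex.abs_arg_half_add_I_half_mul_tan_pi_div_even j
    rw [hc j]
    split_ifs
    · exact ⟨hne, harg⟩
    · exact ⟨by simpa using hne, by rw [Complex.abs_arg_conj, harg]⟩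
  have hsum : ∑ j ∈ Icc 1 i, |Complex.arg (c j)| ≤ π / 2 * (1888 / 3465) :=
    (sum_congr rfl fun j _ ↦ (hcj j).2).trans_le
      (sum_Icc_pi_div_two_mul_inv_two_mul_add_three_le hi4)
  have hprod_ne : ∏ j ∈ Icc 1 i, c j ≠ 0 := prod_ne_zero_iff.2 fun j _ ↦ (hcj j).1
  have hprod := Complex.abs_arg_prod_le (Icc 1 i) (fun j _ ↦ (hcj j).1) (by linarith [Real.pi_pos])
  have harg : |Complex.arg (b * ∏ j ∈ Icc 1 i, c j)| < π / 2 := by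
    linarith [Complex.abs_arg_mul_le hb hprod_ne (by linarith [Real.pi_pos])]
  exact (Complex.abs_arg_lt_pi_div_two_iff.1 harg).resolve_right (mul_ne_zero hb hprod_ne)
end

section
/- For z ∈ ℂ let A(z) denote the 2×2 complex matrix with rows (1 − z²/2, z − z³/4) and (−z, 1 − z²/2). Let γ := 1/2 + i√3/6 and for real τ define R(τ) as the entrywise real part of A(γτ)·A(conj(γ)τ), and let M_H(τ) be the rotation matrix with rows (cos τ, sin τ) and (−sin τ, cos τ). Then as τ → 0: the (1,1) and (2,2) entries of M_H(τ) − R(τ) are O(τ⁶), the (1,2) entry equals −τ⁵/180 + O(τ⁶), and the (2,1) entry equals −τ⁵/120 + O(τ⁶). In particular R(τ) approximates the exact harmonic-oscillator propagator M_H(τ) to order 4. -/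
/-!
Because `γ + γ̄ = 1` and `γ γ̄ = 1/3`, the product `A(γτ) A(γ̄τ)` collapses to a matrix whose
off-diagonal entries are the real polynomials `τ - τ³/6 + τ⁵/72` and `-τ + τ³/6` and whose
diagonal entries are `1 - τ²/2 + γτ⁴/12` and `1 - τ²/2 + γ̄τ⁴/12`, of real part
`1 - τ²/2 + τ⁴/24`. Comparing with the degree-5 Taylor polynomials of `cos` and `sin`, whose
remainders are `O(τ⁶)` (real and imaginary parts of the exponential series at `iτ`), leaves
exactly the fifth-order terms `-τ⁵/180` and `-τ⁵/120`.
-/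

open Asymptotics Filter Complex ComplexConjugate

/-- `M_T(z/2) M_V(z) M_T(z/2)`, one Strang step of size `z` for `H = p²/2 + q²/2`. -/
def leapfrogMatrix {K : Type*} [Field K] (z : K) : Matrix (Fin 2) (Fin 2) K :=
  !![1 - z ^ 2 / 2, z - z ^ 3 / 4; -z, 1 - z ^ 2 / 2]

theorem leapfrogMatrix_mul_leapfrogMatrix {K : Type*} [Field K] [CharZero K] {a b : K}
    (hsum : a + b = 1) (hprod : a * b = 1 / 3) (τ : K) :
    leapfrogMatrix (a * τ) * leapfrogMatrix (b * τ) =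
      !![1 - τ ^ 2 / 2 + a * τ ^ 4 / 12, τ - τ ^ 3 / 6 + τ ^ 5 / 72;
        -τ + τ ^ 3 / 6, 1 - τ ^ 2 / 2 + b * τ ^ 4 / 12] := by
  obtain rfl : b = 1 - a := by linear_combination hsum
  rw [leapfrogMatrix, leapfrogMatrix, Matrix.mul_fin_two]
  ext i j
  fin_cases i <;> fin_cases j <;> simp <;> grind

theorem re_leapfrogMatrix_mul_leapfrogMatrix_conj {γ : ℂ} (hre : γ.re = 1 / 2)
    (hnormSq : normSq γ = 1 / 3) (τ : ℝ) :
    (leapfrogMatrix (γ * τ) * leapfrogMatrix (conj γ * τ)).map re =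
      !![1 - τ ^ 2 / 2 + τ ^ 4 / 24, τ - τ ^ 3 / 6 + τ ^ 5 / 72;
        -τ + τ ^ 3 / 6, 1 - τ ^ 2 / 2 + τ ^ 4 / 24] := by
  have hsum : γ + conj γ = 1 := by rw [add_conj, hre]; norm_num
  have hprod : γ * conj γ = 1 / 3 := by rw [mul_conj, hnormSq]; norm_num
  rw [leapfrogMatrix_mul_leapfrogMatrix hsum hprod]
  ext i j
  fin_cases i <;> fin_cases j <;> simp [← ofReal_pow, hre] <;> ring

theorem Complex.exp_ofReal_mul_I_sub_taylor (x : ℝ) :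
    exp (x * I) - ∑ i ∈ Finset.range 6, (x * I) ^ i / i.factorial =
      ((Real.cos x - (1 - x ^ 2 / 2 + x ^ 4 / 24) : ℝ) : ℂ)
        + ((Real.sin x - (x - x ^ 3 / 6 + x ^ 5 / 120) : ℝ) : ℂ) * I := by
  rw [exp_mul_I, ← ofReal_cos, ← ofReal_sin]
  simp only [Finset.sum_range_succ, Finset.sum_range_zero, Nat.factorial]
  push_cast
  linear_combination -(x ^ 2 / 2 + x ^ 3 * I / 6 + x ^ 4 * (I ^ 2 - 1) / 24
    + x ^ 5 * I * (I ^ 2 - 1) / 120 : ℂ) * I_sq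

theorem Complex.exp_ofReal_mul_I_sub_taylor_isBigO :
    (fun x : ℝ => exp (x * I) - ∑ i ∈ Finset.range 6, (x * I) ^ i / i.factorial)
      =O[nhds 0] fun x : ℝ => x ^ 6 := by
  have hI : Tendsto (fun x : ℝ => (x : ℂ) * I) (nhds 0) (nhds 0) :=
    (continuous_ofReal.mul continuous_const).tendsto' 0 0 (by simp)
  refine ((exp_sub_sum_range_isBigO_pow 6).comp_tendsto hI).trans
    (isBigO_of_le _ fun x => ?_)
  simp [mul_pow]

theorem Complex.abs_le_norm_ofReal_add_ofReal_mul_I (a b : ℝ) :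
    |a| ≤ ‖(a : ℂ) + b * I‖ ∧ |b| ≤ ‖(a : ℂ) + b * I‖ :=
  ⟨by simpa using abs_re_le_norm ((a : ℂ) + b * I),
    by simpa using abs_im_le_norm ((a : ℂ) + b * I)⟩

theorem Real.cos_sub_taylor_isBigO :
    (fun x : ℝ => cos x - (1 - x ^ 2 / 2 + x ^ 4 / 24)) =O[nhds 0] fun x : ℝ => x ^ 6 :=
  (isBigO_of_le _ fun x => by
    rw [exp_ofReal_mul_I_sub_taylor]
    exact (abs_le_norm_ofReal_add_ofReal_mul_I _ _).1).trans exp_ofReal_mul_I_sub_taylor_isBigO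

theorem Real.sin_sub_taylor_isBigO :
    (fun x : ℝ => sin x - (x - x ^ 3 / 6 + x ^ 5 / 120)) =O[nhds 0] fun x : ℝ => x ^ 6 :=
  (isBigO_of_le _ fun x => by
    rw [exp_ofReal_mul_I_sub_taylor]
    exact (abs_le_norm_ofReal_add_ofReal_mul_I _ _).2).trans exp_ofReal_mul_I_sub_taylor_isBigO

/-- **Table 1 of the paper, truncation-error entry for `R̂⁽¹⁾`.**
For the leapfrog matrix `A(z)` of the harmonic oscillator and `γ = 1/2 + i√3/6`, with
`R(τ) = Re(A(γτ)·A(γ̄τ))` and `M_H(τ)` the exact rotation matrix, the entries of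
`M_H(τ) - R(τ)` satisfy: the diagonal ones are `O(τ⁶)`, the `(1,2)` entry is
`-τ⁵/180 + O(τ⁶)`, the `(2,1)` entry is `-τ⁵/120 + O(τ⁶)`; in particular all entries
are `O(τ⁵)`, i.e. `R` is a method of order `4`. -/
theorem truncation_error_R1_harmonic_oscillator
    (A : ℂ → Matrix (Fin 2) (Fin 2) ℂ)
    (hA : ∀ z : ℂ, A z = !![1 - z ^ 2 / 2, z - z ^ 3 / 4; -z, 1 - z ^ 2 / 2])
    (γ : ℂ) (hγ : γ = 1 / 2 + Complex.I * (Real.sqrt 3 : ℝ) / 6)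
    (R : ℝ → Matrix (Fin 2) (Fin 2) ℝ)
    (hR : ∀ τ : ℝ, R τ = (A (γ * τ) * A ((starRingEnd ℂ) γ * τ)).map Complex.re)
    (MH : ℝ → Matrix (Fin 2) (Fin 2) ℝ)
    (hMH : ∀ τ : ℝ, MH τ = !![Real.cos τ, Real.sin τ; -Real.sin τ, Real.cos τ]) :
    ((fun τ : ℝ => (MH τ - R τ) 0 0) =O[nhds 0] fun τ : ℝ => τ ^ 6) ∧
    ((fun τ : ℝ => (MH τ - R τ) 1 1) =O[nhds 0] fun τ : ℝ => τ ^ 6) ∧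
    ((fun τ : ℝ => (MH τ - R τ) 0 1 + τ ^ 5 / 180) =O[nhds 0] fun τ : ℝ => τ ^ 6) ∧
    ((fun τ : ℝ => (MH τ - R τ) 1 0 + τ ^ 5 / 120) =O[nhds 0] fun τ : ℝ => τ ^ 6) ∧
    (∀ i j : Fin 2, (fun τ : ℝ => (MH τ - R τ) i j) =O[nhds 0] fun τ : ℝ => τ ^ 5) := by
  have hγre : γ.re = 1 / 2 := by simp [hγ]
  have hγnormSq : normSq γ = 1 / 3 := by
    have h3 : √3 * √3 = 3 := Real.mul_self_sqrt (by norm_num)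
    simp [hγ, normSq_apply]
    linear_combination h3 / 36
  set c := fun τ : ℝ => Real.cos τ - (1 - τ ^ 2 / 2 + τ ^ 4 / 24)
  set s := fun τ : ℝ => Real.sin τ - (τ - τ ^ 3 / 6 + τ ^ 5 / 120)
  have herr (τ : ℝ) : MH τ - R τ = !![c τ, s τ - τ ^ 5 / 180; -s τ - τ ^ 5 / 120, c τ] := by
    have hA' : A = leapfrogMatrix := funext hA
    rw [hMH, hR, hA', re_leapfrogMatrix_mul_leapfrogMatrix_conj hγre hγnormSq]
    ext i j
    fin_cases i <;> fin_cases j <;> simp [c, s] <;> ring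
  have h65 : (fun τ : ℝ => τ ^ 6) =O[nhds 0] fun τ => τ ^ 5 :=
    (isLittleO_pow_pow (by norm_num)).isBigO
  have h5 (d : ℝ) : (fun τ : ℝ => τ ^ 5 / d) =O[nhds 0] fun τ => τ ^ 5 :=
    ((isBigO_refl _ _).const_mul_left d⁻¹).congr_left fun τ => by ring
  simp only [herr, Matrix.of_apply, Matrix.cons_val', Matrix.cons_val_zero, Matrix.cons_val_one,
    Matrix.empty_val', Matrix.cons_val_fin_one, sub_add_cancel]
  refine ⟨Real.cos_sub_taylor_isBigO, Real.cos_sub_taylor_isBigO, Real.sin_sub_taylor_isBigO,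
    Real.sin_sub_taylor_isBigO.neg_left, fun i j => ?_⟩
  fin_cases i <;> fin_cases j
  · exact Real.cos_sub_taylor_isBigO.trans h65
  · exact (Real.sin_sub_taylor_isBigO.trans h65).sub (h5 180)
  · exact (Real.sin_sub_taylor_isBigO.neg_left.trans h65).sub (h5 120)
  · exact Real.cos_sub_taylor_isBigO.trans h65
end

section
/- Let c₃ ∈ ℝ and set β := 1 − i c₃ ∈ ℂ. Let ṽ₀, w̃₀ ∈ ℂ, set M̃₀ := 4i ṽ₀ w̃₀, and let I ⊆ ℝ be an open interval containing 0 such that 1 + 2t M̃₀ ∉ (−∞, 0] for all t ∈ I. Define, using the principal branch Log of the complex logarithm, ṽ(t) := ṽ₀ · exp(−(β/2) Log(1 + 2t M̃₀)) and w̃(t) := w̃₀ · exp(−(conj(β)/2) Log(1 + 2t M̃₀)). Then for every t ∈ I: (a) ṽ and w̃ are differentiable at t with ṽ'(t) = −β · (4i ṽ(t) w̃(t)) · ṽ(t) and w̃'(t) = −conj(β) · (4i ṽ(t) w̃(t)) · w̃(t); (b) 4i ṽ(t) w̃(t) = M̃₀/(1 + 2t M̃₀); and (c) ṽ(0) = ṽ₀,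 w̃(0) = w̃₀. -/
/-! Writing `L(t) = 1 + 2t M̃₀`, the proposed solutions are the powers `ṽ = ṽ₀ L^(-β/2)` and
`w̃ = w̃₀ L^(-β̄/2)`. Since `Re β = 1`, the exponents add up to `-1`, so `4i ṽ w̃ = M̃₀ / L`;
and differentiating `L^(-γ/2)` produces the factor `-(γ/2) · 2M̃₀ / L = -γ M̃`. -/

open Complex

theorem cexp_mul_log_mul_cexp_mul_log_of_add_eq_neg_one {a b z : ℂ} (hab : a + b = -1)
    (hz : z ≠ 0) : exp (a * log z) * exp (b * log z) = z⁻¹ := by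
  rw [← exp_add, ← add_mul, hab, neg_one_mul, exp_neg, exp_log hz]

theorem hasDerivAt_const_mul_cexp_mul_clog_real {f : ℝ → ℂ} {f' : ℂ} {t : ℝ} (c γ : ℂ)
    (hf : HasDerivAt f f' t) (hft : f t ∈ slitPlane) :
    HasDerivAt (fun s => c * exp (γ * log (f s)))
      (γ * (f' / f t) * (c * exp (γ * log (f t)))) t :=
  (((hf.clog_real hft).const_mul γ).cexp.const_mul c).congr_deriv (by ring)

theorem hasDerivAt_const_mul_cexp_neg_half_mul_log_one_add {M : ℂ} {t : ℝ} (c γ : ℂ)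
    (hs : 1 + 2 * (t : ℂ) * M ∈ slitPlane) :
    HasDerivAt (fun s : ℝ => c * exp (-(γ / 2) * log (1 + 2 * (s : ℂ) * M)))
      (-γ * (M / (1 + 2 * (t : ℂ) * M)) * (c * exp (-(γ / 2) * log (1 + 2 * (t : ℂ) * M))))
      t := by
  have hL : HasDerivAt (fun s : ℝ => 1 + 2 * (s : ℂ) * M) (2 * M) t := by
    simpa [mul_right_comm] using
      ((hasDerivAt_id (t : ℂ)).const_mul (2 * M)).comp_ofReal.const_add 1
  exact (hasDerivAt_const_mul_cexp_mul_clog_real c (-(γ / 2)) hL hs).congr_deriv (by ring)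

theorem ginzburg_landau_nonlinear_exact_flow_general
    (c₃ : ℝ) (β : ℂ) (hβ : β = 1 - Complex.I * (c₃ : ℂ))
    (v₀ w₀ : ℂ) (M₀ : ℂ) (hM₀ : M₀ = 4 * Complex.I * v₀ * w₀)
    (I : Set ℝ)
    (hslit : ∀ t ∈ I, (1 + 2 * (t : ℂ) * M₀) ∈ Complex.slitPlane)
    (v w : ℝ → ℂ)
    (hv : ∀ t : ℝ, v t = v₀ * Complex.exp (-(β / 2) *
      Complex.log (1 + 2 * (t : ℂ) * M₀)))
    (hw : ∀ t : ℝ, w t = w₀ * Complex.exp (-((starRingEnd ℂ) β / 2) *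
      Complex.log (1 + 2 * (t : ℂ) * M₀))) :
    ∀ t ∈ I,
      -- (a) the differential equations
      HasDerivAt v (-β * (4 * Complex.I * v t * w t) * v t) t ∧
      HasDerivAt w (-(starRingEnd ℂ) β * (4 * Complex.I * v t * w t) * w t) t ∧
      -- (b) the modulus function
      4 * Complex.I * v t * w t = M₀ / (1 + 2 * (t : ℂ) * M₀) ∧
      -- (c) the initial values
      v 0 = v₀ ∧ w 0 = w₀ := by
  intro t ht
  have hs := hslit t ht
  have hre : β.re = 1 := by simp [hβ]
  have hexponents : -(β / 2) + -((starRingEnd ℂ) β / 2) = -1 := by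
    have hsum := add_conj β
    rw [hre] at hsum
    push_cast at hsum
    linear_combination (-1 / 2 : ℂ) * hsum
  have hM : 4 * Complex.I * v t * w t = M₀ / (1 + 2 * (t : ℂ) * M₀) := by
    calc 4 * Complex.I * v t * w t
        = 4 * Complex.I * v₀ * w₀ * (exp (-(β / 2) * log (1 + 2 * (t : ℂ) * M₀)) *
            exp (-((starRingEnd ℂ) β / 2) * log (1 + 2 * (t : ℂ) * M₀))) := by
          rw [hv, hw]; ring
      _ = M₀ / (1 + 2 * (t : ℂ) * M₀) := by
          rw [cexp_mul_log_mul_cexp_mul_log_of_add_eq_neg_one hexponents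
            (slitPlane_ne_zero hs), hM₀, div_eq_mul_inv]
  refine ⟨?_, ?_, hM, by simp [hv], by simp [hw]⟩
  · rw [hM, funext hv]
    exact hasDerivAt_const_mul_cexp_neg_half_mul_log_one_add v₀ β hs
  · rw [hM, funext hw]
    exact hasDerivAt_const_mul_cexp_neg_half_mul_log_one_add w₀ _ hs

/-- **Exact solution (eq. vtwt) of the nonlinear part of the diagonalized
complex Ginzburg–Landau system (Section 4.4 of the paper).**
With `β = 1 - i c₃`, `M̃₀ = 4i v₀ w₀` and, on an open interval `I ∋ 0` where
`1 + 2t M̃₀` stays off `(-∞, 0]`, the functions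
`v(t) = v₀ exp(-(β/2) Log(1 + 2t M̃₀))` and `w(t) = w₀ exp(-(β̄/2) Log(1 + 2t M̃₀))`
solve `v' = -β M̃ v`, `w' = -β̄ M̃ w` with `M̃(t) = 4i v(t) w(t) = M̃₀/(1 + 2t M̃₀)`
and initial values `v₀`, `w₀`. -/
theorem ginzburg_landau_nonlinear_exact_flow
    (c₃ : ℝ) (β : ℂ) (hβ : β = 1 - Complex.I * (c₃ : ℂ))
    (v₀ w₀ : ℂ) (M₀ : ℂ) (hM₀ : M₀ = 4 * Complex.I * v₀ * w₀)
    (I : Set ℝ) (hI : ∃ a b : ℝ, I = Set.Ioo a b) (h0 : (0 : ℝ) ∈ I)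
    (hslit : ∀ t ∈ I, (1 + 2 * (t : ℂ) * M₀) ∈ Complex.slitPlane)
    (v w : ℝ → ℂ)
    (hv : ∀ t : ℝ, v t = v₀ * Complex.exp (-(β / 2) *
      Complex.log (1 + 2 * (t : ℂ) * M₀)))
    (hw : ∀ t : ℝ, w t = w₀ * Complex.exp (-((starRingEnd ℂ) β / 2) *
      Complex.log (1 + 2 * (t : ℂ) * M₀))) :
    ∀ t ∈ I,
      -- (a) the differential equations
      HasDerivAt v (-β * (4 * Complex.I * v t * w t) * v t) t ∧
      HasDerivAt w (-(starRingEnd ℂ) β * (4 * Complex.I * v t * w t) * w t) t ∧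
      -- (b) the modulus function
      4 * Complex.I * v t * w t = M₀ / (1 + 2 * (t : ℂ) * M₀) ∧
      -- (c) the initial values
      v 0 = v₀ ∧ w 0 = w₀ :=
  ginzburg_landau_nonlinear_exact_flow_general c₃ β hβ v₀ w₀ M₀ hM₀ I hslit v w hv hw
end
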